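/- arXiv:2604.24099 — 5 statements merged into one kernel-verified Lean document; each statement's English description precedes it below -/
import Mathlib

section
/- Let n ≥ 0 and 0 ≤ m ≤ n. The number of m-dimensional isotropic subspaces of V = 𝔽₂^{2n} equals binom(n,m)₂ · ∏_{i=n−m+1}^{n} (2^i + 1), where binom(n,m)₂ is the Gaussian binomial coefficient. -/
/-- The field with two elements. -/
abbrev F2 := ZMod 2

/-- The phase space `V = 𝔽₂ⁿ × 𝔽₂ⁿ`. -/
abbrev V (n : ℕ) : Type := (Fin n → F2) × (Fin n → F2)

/-- The symplectic form `[a,b] = aₓ·b_z + a_z·bₓ` on `V n`. -/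
def symp {n : ℕ} (a b : V n) : F2 :=
  (∑ i, a.1 i * b.2 i) + (∑ i, a.2 i * b.1 i)

/-- A subspace is isotropic if the symplectic form vanishes on it. -/
def IsIsotropic {n : ℕ} (S : Submodule F2 (V n)) : Prop :=
  ∀ x ∈ S, ∀ y ∈ S, symp x y = 0

/-- Gaussian binomial coefficient `binom(m,r)₂`. -/
def gaussBinom (m r : ℕ) : ℚ :=
  ∏ i ∈ Finset.range r, ((2 ^ (m - i) - 1 : ℚ) / (2 ^ (r - i) - 1))

/-! Let `a m` count the `m`-dimensional isotropic subspaces and double count the pairs `S < T`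
of isotropic subspaces of dimensions `m` and `m + 1`. Every hyperplane of an isotropic `T` is
isotropic, giving `2 ^ (m + 1) - 1` pairs per `T`. Since the form is alternating, the isotropic
`T` above `S` are exactly the spaces `S ⊔ ⟨v⟩` with `v ∈ Sᗮ \ S`; each comes from `2 ^ m` such
`v`, so there are `(2 ^ (2n - m) - 2 ^ m) / 2 ^ m = 2 ^ (2(n - m)) - 1` of them. Thus
`a (m + 1) (2 ^ (m + 1) - 1) = a m (2 ^ (n - m) - 1) (2 ^ (n - m) + 1)`, the recursion satisfied
by the claimed formula. -/

open Module Submodule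

theorem Nat.card_mul_eq_card_mul {α β : Type*} [Finite α] [Finite β] (r : α → β → Prop)
    {m n : ℕ} (hm : ∀ a, Nat.card {b // r a b} = m) (hn : ∀ b, Nat.card {a // r a b} = n) :
    Nat.card α * m = Nat.card β * n := by
  classical
  have := Fintype.ofFinite α
  have := Fintype.ofFinite β
  simp only [Nat.card_eq_fintype_card, Fintype.card_subtype] at *
  exact Finset.card_mul_eq_card_mul r (fun a _ => hm a) (fun b _ => hn b)

theorem Submodule.sup_span_singleton_eq_of_le {K W : Type*} [Field K] [AddCommGroup W]
    [Module K W] [FiniteDimensional K W] {S T : Submodule K W} {v : W} (hST : S ≤ T)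
    (hvT : v ∈ T) (hvS : v ∉ S) (hT : finrank K T = finrank K S + 1) : S ⊔ span K {v} = T :=
  eq_of_le_of_finrank_eq (sup_le hST ((span_singleton_le_iff_mem v T).mpr hvT))
    (by rw [finrank_sup_span_singleton hvS, hT])

section F2Space

variable {W : Type*} [AddCommGroup W] [Module F2 W] [Finite W]

theorem natCard_submodule (S : Submodule F2 W) : Nat.card S = 2 ^ finrank F2 S := by
  rw [Module.natCard_eq_pow_finrank (K := F2), Nat.card_zmod]

theorem natCard_mem_and_notMem {S T : Submodule F2 W} (hST : S ≤ T) :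
    Nat.card {v // v ∈ T ∧ v ∉ S} = 2 ^ finrank F2 T - 2 ^ finrank F2 S := by
  change Nat.card ↥((T : Set W) \ (S : Set W)) = _
  rw [Nat.card_coe_set_eq, Set.ncard_sdiff hST, ← Nat.card_coe_set_eq, ← Nat.card_coe_set_eq,
    SetLike.coe_sort_coe, SetLike.coe_sort_coe, natCard_submodule, natCard_submodule]

theorem natCard_covers_mul {S U : Submodule F2 W} (hSU : S ≤ U) :
    Nat.card {T : Submodule F2 W // S ≤ T ∧ T ≤ U ∧ finrank F2 T = finrank F2 S + 1} *
      2 ^ finrank F2 S = 2 ^ finrank F2 U - 2 ^ finrank F2 S := by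
  have key := Nat.card_mul_eq_card_mul
    (α := {v // v ∈ U ∧ v ∉ S})
    (β := {T : Submodule F2 W // S ≤ T ∧ T ≤ U ∧ finrank F2 T = finrank F2 S + 1})
    (fun v T => v.1 ∈ T.1) (m := 1) (n := 2 ^ finrank F2 S) ?_ ?_
  · rw [mul_one, natCard_mem_and_notMem hSU] at key
    exact key.symm
  · rintro ⟨v, hvU, hvS⟩
    rw [Nat.card_eq_one_iff_exists]
    refine ⟨⟨⟨S ⊔ span F2 {v}, le_sup_left,
      sup_le hSU ((span_singleton_le_iff_mem v U).mpr hvU), finrank_sup_span_singleton hvS⟩,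
      mem_sup_right (mem_span_singleton_self v)⟩, ?_⟩
    rintro ⟨⟨T, hST, -, hT⟩, hvT⟩
    exact Subtype.ext (Subtype.ext (sup_span_singleton_eq_of_le hST hvT hvS hT).symm)
  · rintro ⟨T, hST, hTU, hT⟩
    have e : {v : {v // v ∈ U ∧ v ∉ S} // v.1 ∈ T} ≃ {v // v ∈ T ∧ v ∉ S} :=
      (Equiv.subtypeSubtypeEquivSubtypeInter _ (· ∈ T)).trans <| Equiv.subtypeEquivRight
        fun v => ⟨fun h => ⟨h.2, h.1.2⟩, fun h => ⟨⟨hTU h.1, h.2⟩, h.1⟩⟩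
    rw [Nat.card_congr e, natCard_mem_and_notMem hST, hT, pow_succ, mul_two, Nat.add_sub_cancel]

theorem natCard_finrank_eq_one :
    Nat.card {L : Submodule F2 W // finrank F2 L = 1} = 2 ^ finrank F2 W - 1 := by
  have h := Projectivization.card F2 W
  rw [Nat.card_congr (Projectivization.equivSubmodule F2 W), Nat.card_zmod,
    Module.natCard_eq_pow_finrank (K := F2), Nat.card_zmod] at h
  simpa using h.symm

theorem natCard_hyperplanes {d : ℕ} (hW : finrank F2 W = d + 1) :
    Nat.card {H : Submodule F2 W // finrank F2 H = d} = 2 ^ (d + 1) - 1 := by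
  have e : {H : Submodule F2 W // finrank F2 H = d} ≃
      {L : Submodule F2 (Dual F2 W) // finrank F2 L = 1} :=
    (Subspace.orderIsoFiniteDimensional.toEquiv.trans OrderDual.ofDual).subtypeEquiv fun H => by
      have := Subspace.finrank_add_finrank_dualAnnihilator_eq H
      change _ ↔ finrank F2 H.dualAnnihilator = 1
      omega
  have : Finite (Dual F2 W) := Module.finite_of_finite F2
  rw [Nat.card_congr e, natCard_finrank_eq_one, Subspace.dual_finrank_eq, hW]

theorem natCard_hyperplanes_le {T : Submodule F2 W} {d : ℕ} (hT : finrank F2 T = d + 1) :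
    Nat.card {S : Submodule F2 W // S ≤ T ∧ finrank F2 S = d} = 2 ^ (d + 1) - 1 := by
  rw [← natCard_hyperplanes hT]
  refine Nat.card_congr (((MapSubtype.orderIso T).toEquiv.subtypeEquiv fun p => ?_).trans
    (Equiv.subtypeSubtypeEquivSubtypeInter (· ≤ T) fun S => finrank F2 S = d)).symm
  exact finrank_map_subtype_eq T p ▸ Iff.rfl

end F2Space

namespace LinearMap.BilinForm

theorem IsAlt.sup_span_singleton_le_orthogonal {K W : Type*} [CommRing K] [AddCommGroup W]
    [Module K W] {B : LinearMap.BilinForm K W} (hB : B.IsAlt) {S : Submodule K W} {v : W}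
    (hS : S ≤ B.orthogonal S) (hv : v ∈ B.orthogonal S) :
    S ⊔ span K {v} ≤ B.orthogonal (S ⊔ span K {v}) := by
  intro x hx y hy
  obtain ⟨s, hs, _, hc, rfl⟩ := mem_sup.mp hx
  obtain ⟨t, ht, _, hd, rfl⟩ := mem_sup.mp hy
  obtain ⟨c, rfl⟩ := mem_span_singleton.mp hc
  obtain ⟨d, rfl⟩ := mem_span_singleton.mp hd
  have hts : B t s = 0 := hS hs t ht
  have htv : B t v = 0 := hv t ht
  have hvs : B v s = 0 := hB.isRefl _ _ (hv s hs)
  simp [hts, htv, hvs, hB v]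

theorem IsAlt.le_orthogonal_self_iff {K W : Type*} [Field K] [AddCommGroup W] [Module K W]
    [FiniteDimensional K W] {B : LinearMap.BilinForm K W} (hB : B.IsAlt) {S T : Submodule K W}
    (hS : S ≤ B.orthogonal S) (hST : S ≤ T) (hT : finrank K T = finrank K S + 1) :
    T ≤ B.orthogonal T ↔ T ≤ B.orthogonal S := by
  refine ⟨fun h => h.trans (orthogonal_le hST), fun h => ?_⟩
  have hne : S ≠ T := fun h => by rw [h] at hT; omega
  obtain ⟨v, hvT, hvS⟩ := SetLike.exists_of_lt (hST.lt_of_ne hne)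
  rw [← sup_span_singleton_eq_of_le hST hvT hvS hT]
  exact hB.sup_span_singleton_le_orthogonal hS (h hvT)

end LinearMap.BilinForm

section Alternating

variable {W : Type*} [AddCommGroup W] [Module F2 W] [Finite W] {B : LinearMap.BilinForm F2 W}

theorem natCard_isotropic_covers (hB : B.IsAlt) (hBn : B.Nondegenerate) {S : Submodule F2 W}
    (hS : S ≤ B.orthogonal S) :
    Nat.card {T : Submodule F2 W //
        S ≤ T ∧ T ≤ B.orthogonal T ∧ finrank F2 T = finrank F2 S + 1}
      = 2 ^ (finrank F2 W - 2 * finrank F2 S) - 1 := by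
  rw [Nat.card_congr (Equiv.subtypeEquivRight fun _ => and_congr_right fun hST =>
    and_congr_left fun hT => hB.le_orthogonal_self_iff hS hST hT)]
  have hle := Submodule.finrank_mono hS
  have hcount := natCard_covers_mul hS
  rw [LinearMap.BilinForm.finrank_orthogonal hBn] at hle hcount
  refine Nat.eq_of_mul_eq_mul_right (by positivity) (hcount.trans ?_)
  rw [Nat.sub_one_mul, ← pow_add]
  congr 2
  omega

theorem natCard_isotropic_succ_mul (hB : B.IsAlt) (hBn : B.Nondegenerate) (m : ℕ) :
    Nat.card {T : Submodule F2 W // T ≤ B.orthogonal T ∧ finrank F2 T = m + 1}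
        * (2 ^ (m + 1) - 1)
      = Nat.card {S : Submodule F2 W // S ≤ B.orthogonal S ∧ finrank F2 S = m}
        * (2 ^ (finrank F2 W - 2 * m) - 1) := by
  refine (Nat.card_mul_eq_card_mul (fun S T => S.1 ≤ T.1) ?_ ?_).symm
  · rintro ⟨S, hS, rfl⟩
    rw [← natCard_isotropic_covers hB hBn hS]
    exact Nat.card_congr ((Equiv.subtypeSubtypeEquivSubtypeInter _ _).trans
      (Equiv.subtypeEquivRight fun T => by tauto))
  · rintro ⟨T, hT, hr⟩
    rw [← natCard_hyperplanes_le hr]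
    exact Nat.card_congr ((Equiv.subtypeSubtypeEquivSubtypeInter _ (· ≤ T)).trans
      (Equiv.subtypeEquivRight fun S => ⟨fun h => ⟨h.2, h.1.2⟩, fun h =>
        ⟨⟨h.1.trans (hT.trans (LinearMap.BilinForm.orthogonal_le h.1)), h.2⟩, h.1⟩⟩))

theorem natCard_isotropic_finrank_zero :
    Nat.card {S : Submodule F2 W // S ≤ B.orthogonal S ∧ finrank F2 S = 0} = 1 := by
  rw [Nat.card_eq_one_iff_exists]
  refine ⟨⟨⊥, bot_le, finrank_bot F2 W⟩, fun ⟨S, _, hS⟩ => ?_⟩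
  exact Subtype.ext (Submodule.finrank_eq_zero.mp hS)

end Alternating

def sympForm (n : ℕ) : LinearMap.BilinForm F2 (V n) :=
  LinearMap.mk₂ F2 symp
    (fun a a' b => by
      simp only [symp, Prod.fst_add, Prod.snd_add, Pi.add_apply, add_mul, Finset.sum_add_distrib]
      ring)
    (fun c a b => by
      simp only [symp, Prod.smul_fst, Prod.smul_snd, Pi.smul_apply, smul_eq_mul, mul_add,
        Finset.mul_sum, mul_assoc])
    (fun a b b' => by
      simp only [symp, Prod.fst_add, Prod.snd_add, Pi.add_apply, mul_add, Finset.sum_add_distrib]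
      ring)
    (fun c a b => by
      simp only [symp, Prod.smul_fst, Prod.smul_snd, Pi.smul_apply, smul_eq_mul, mul_add,
        Finset.mul_sum, mul_left_comm])

theorem sympForm_isAlt (n : ℕ) : (sympForm n).IsAlt := fun a => by
  change (∑ i, a.1 i * a.2 i) + (∑ i, a.2 i * a.1 i) = 0
  simp only [mul_comm (a.2 _), CharTwo.add_self_eq_zero]

theorem sympForm_nondegenerate (n : ℕ) : (sympForm n).Nondegenerate := by
  refine (sympForm_isAlt n).isRefl.nondegenerate_iff_separatingLeft.mpr fun a h => ?_
  ext i
  · simpa [sympForm, symp, Pi.single_apply] using h (0, Pi.single i 1)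
  · simpa [sympForm, symp, Pi.single_apply] using h (Pi.single i 1, 0)

theorem finrank_V (n : ℕ) : finrank F2 (V n) = 2 * n := by
  simp [Module.finrank_prod, two_mul]

theorem isIsotropic_iff_le_orthogonal {n : ℕ} (S : Submodule F2 (V n)) :
    IsIsotropic S ↔ S ≤ (sympForm n).orthogonal S :=
  ⟨fun h x hx y hy => h y hy x hx, fun h x hx _ hy => h hy x hx⟩

theorem two_pow_succ_sub_one_ne_zero (i : ℕ) : (2 : ℚ) ^ (i + 1) - 1 ≠ 0 :=
  sub_ne_zero_of_ne (one_lt_pow₀ one_lt_two i.succ_ne_zero).ne'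

theorem gaussBinom_eq_div (n r : ℕ) :
    gaussBinom n r = (∏ i ∈ Finset.range r, ((2 : ℚ) ^ (n - i) - 1))
      / ∏ i ∈ Finset.range r, ((2 : ℚ) ^ (i + 1) - 1) := by
  rw [gaussBinom, Finset.prod_div_distrib,
    ← Finset.prod_range_reflect (fun i => (2 : ℚ) ^ (i + 1) - 1)]
  congr 1
  refine Finset.prod_congr rfl fun i hi => ?_
  rw [Finset.mem_range] at hi
  congr 2
  omega

theorem gaussBinom_succ_mul (n m : ℕ) :
    gaussBinom n (m + 1) * (2 ^ (m + 1) - 1) = gaussBinom n m * (2 ^ (n - m) - 1) := by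
  have := Finset.prod_ne_zero_iff.mpr
    fun i (_ : i ∈ Finset.range m) => two_pow_succ_sub_one_ne_zero i
  rw [gaussBinom_eq_div, gaussBinom_eq_div, Finset.prod_range_succ, Finset.prod_range_succ]
  field_simp [two_pow_succ_sub_one_ne_zero m]

theorem gaussBinom_mul_prod_succ_mul {n m : ℕ} (h : m < n) :
    (gaussBinom n (m + 1) * ∏ i ∈ Finset.Icc (n - (m + 1) + 1) n, ((2 : ℚ) ^ i + 1))
        * (2 ^ (m + 1) - 1)
      = (gaussBinom n m * ∏ i ∈ Finset.Icc (n - m + 1) n, ((2 : ℚ) ^ i + 1))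
        * (2 ^ (2 * n - 2 * m) - 1) := by
  rw [show n - (m + 1) + 1 = n - m by omega,
    ← Finset.insert_Icc_add_one_left_eq_Icc (show n - m ≤ n by omega),
    Finset.prod_insert (by simp),
    show 2 * n - 2 * m = (n - m) + (n - m) by omega, pow_add]
  linear_combination (2 ^ (n - m) + 1) * (∏ i ∈ Finset.Icc (n - m + 1) n, ((2 : ℚ) ^ i + 1))
    * gaussBinom_succ_mul n m

/-- The number of `m`-dimensional isotropic subspaces of `V = 𝔽₂^{2n}` equals
`binom(n,m)₂ · ∏_{i=n−m+1}^{n} (2^i + 1)`. -/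
theorem stmt0 (n m : ℕ) (hm : m ≤ n) :
    (Nat.card {S : Submodule F2 (V n) // IsIsotropic S ∧ Module.finrank F2 S = m} : ℚ)
      = gaussBinom n m * ∏ i ∈ Finset.Icc (n - m + 1) n, ((2 : ℚ) ^ i + 1) := by
  simp_rw [isIsotropic_iff_le_orthogonal]
  induction m with
  | zero => rw [natCard_isotropic_finrank_zero]; simp [gaussBinom]
  | succ m ih =>
    have hrec := congrArg (Nat.cast : ℕ → ℚ)
      (natCard_isotropic_succ_mul (sympForm_isAlt n) (sympForm_nondegenerate n) m)
    push_cast [Nat.one_le_two_pow, finrank_V] at hrec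
    refine mul_right_cancel₀ (two_pow_succ_sub_one_ne_zero m) ?_
    rw [hrec, ih (by omega), gaussBinom_mul_prod_succ_mul hm]
end

section
/- Let n ≥ 2, let V₀ be an n-dimensional vector space over 𝔽₂, let K ⊆ V₀ be a subspace with dim(K) = κ, and let 0 ≤ m ≤ n. Then the average of |S ∩ K|² over all m-dimensional subspaces S of V₀ (uniformly chosen) equals 1 + 3(2^κ − 1)·(2^m − 1)/(2^n − 1) + (2^κ − 1)(2^κ − 2)·((2^m − 1)(2^{m−1} − 1))/((2^n − 1)(2^{n−1} − 1)), and this quantity is at most 1 + 3·2^{κ+m−n} + 4^{κ+m−n}. -/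
def gammaVal (n κ m : ℕ) : ℚ :=
  1 + 3 * ((2 : ℚ) ^ κ - 1) * (((2 : ℚ) ^ m - 1) / ((2 : ℚ) ^ n - 1))
    + ((2 : ℚ) ^ κ - 1) * ((2 : ℚ) ^ κ - 2) *
        ((((2 : ℚ) ^ m - 1) * ((2 : ℚ) ^ ((m : ℤ) - 1) - 1)) /
          (((2 : ℚ) ^ n - 1) * ((2 : ℚ) ^ ((n : ℤ) - 1) - 1)))

/-!
Expanding the square, `∑_S |S ∩ K|² = ∑_{(x, y) ∈ K²} #{S | x, y ∈ S}`. As `GL(V)` acts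
transitively on the subspaces of a given dimension, the inner count only depends on the dimension
`d` of `span {x, y}`. Double counting the incidences between `m`-dimensional subspaces and pairs of
rank `d` in all of `V` then gives `#{S | x, y ∈ S} = N · P_d(m) / P_d(n)`, where `N` is the number
of `m`-dimensional subspaces and `P_d(k)` the number of pairs of rank `d` in `𝔽_q^k`; hence the
average is `∑_{d ≤ 2} P_d(κ) P_d(m) / P_d(n)`. The bound follows from
`(a - t)(b - t)/(c - t) ≤ ab/c` for `t = 1, 2`.
-/

open Module Finset

theorem Finset.card_nsmul_sum_eq_card_nsmul_sum_of_subset {ι M : Type*} [AddCommMonoid M]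
    {s t : Finset ι} {f : ι → M} (hst : s ⊆ t) (hf : ∀ a ∈ t, ∀ b ∈ t, f a = f b) :
    #t • ∑ i ∈ s, f i = #s • ∑ i ∈ t, f i := by
  rcases t.eq_empty_or_nonempty with rfl | ⟨a, ha⟩
  · simp [subset_empty.mp hst]
  rw [sum_congr rfl fun i hi => hf i (hst hi) a ha, sum_congr rfl fun i hi => hf i hi a ha,
    sum_const, sum_const, smul_smul, smul_smul, mul_comm]

theorem finrank_range_fin_lt {R M : Type*} [Semiring R] [StrongRankCondition R] [AddCommMonoid M]
    [Module R M] {r : ℕ} (p : Fin r → M) : (Set.range p).finrank R < r + 1 :=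
  Nat.lt_succ_of_le ((finrank_range_le_card p).trans_eq (Fintype.card_fin r))

namespace Submodule

variable {F V : Type*} [Field F] [AddCommGroup V] [Module F V]

theorem exists_finrank_eq {m : ℕ} (hm : m ≤ finrank F V) :
    ∃ S : Submodule F V, finrank F S = m := by
  obtain ⟨s, hs, hli⟩ := exists_finset_linearIndependent_of_le_finrank hm
  exact ⟨span F (Set.range ((↑) : s → V)), by rw [finrank_span_eq_card hli, Fintype.card_coe, hs]⟩

theorem exists_linearEquiv_map_eq_of_finrank_eq [FiniteDimensional F V] {W W' : Submodule F V}
    (h : finrank F W = finrank F W') : ∃ g : V ≃ₗ[F] V, W.map (g : V →ₗ[F] V) = W' := by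
  obtain ⟨C, hC⟩ := W.exists_isCompl
  obtain ⟨C', hC'⟩ := W'.exists_isCompl
  have hCC' : finrank F C = finrank F C' := by
    have := finrank_add_eq_of_isCompl hC
    have := finrank_add_eq_of_isCompl hC'
    omega
  let g : V ≃ₗ[F] V := (prodEquivOfIsCompl W C hC).symm ≪≫ₗ
    ((LinearEquiv.ofFinrankEq W W' h).prodCongr (LinearEquiv.ofFinrankEq C C' hCC')) ≪≫ₗ
    prodEquivOfIsCompl W' C' hC'
  refine ⟨g, eq_of_le_of_finrank_eq ?_ (by rw [LinearEquiv.finrank_map_eq, h])⟩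
  rintro _ ⟨w, hw, rfl⟩
  simp [g, prodEquivOfIsCompl_symm_apply_left W C hC ⟨w, hw⟩]

end Submodule

/-- The number of pairs of vectors of `𝔽_q^k` spanning a subspace of dimension `d`. -/
def numPairsOfRank (q k : ℕ) : ℕ → ℚ
  | 0 => 1
  | 1 => ((q : ℚ) ^ k - 1) * (q + 1)
  | 2 => ((q : ℚ) ^ k - 1) * (q ^ k - q)
  | _ => 0

theorem numPairsOfRank_ne_zero {q k d : ℕ} (hq : 2 ≤ q) (hk : 2 ≤ k) (hd : d < 3) :
    numPairsOfRank q k d ≠ 0 := by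
  have hq' : (2 : ℚ) ≤ q := by exact_mod_cast hq
  have hqk : (q : ℚ) ^ 2 ≤ q ^ k := pow_le_pow_right₀ (by linarith) hk
  have : (q : ℚ) < q ^ 2 := by nlinarith
  interval_cases d <;> simp only [numPairsOfRank]
  · exact one_ne_zero
  · exact mul_ne_zero (by linarith) (by positivity)
  · exact mul_ne_zero (by linarith) (by linarith)

section Pairs

open scoped Classical

variable {F W : Type*} [Field F] [AddCommGroup W] [Module F W] [Fintype W]

theorem card_pairs_finrank_eq_zero :
    #{p : Fin 2 → W | (Set.range p).finrank F = 0} = 1 := by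
  rw [card_eq_one]
  refine ⟨0, ?_⟩
  ext p
  simp only [mem_filter, mem_univ, true_and, mem_singleton, Set.finrank, Submodule.finrank_eq_zero,
    Submodule.span_eq_bot, Set.forall_mem_range, funext_iff, Pi.zero_apply]

variable [Fintype F]

theorem card_pairs_finrank_eq_two :
    (#{p : Fin 2 → W | (Set.range p).finrank F = 2} : ℚ) =
      ((Fintype.card F : ℚ) ^ finrank F W - 1) *
        (Fintype.card F ^ finrank F W - Fintype.card F) := by
  have hli (p : Fin 2 → W) : (Set.range p).finrank F = 2 ↔ LinearIndependent F p := by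
    rw [linearIndependent_iff_card_eq_finrank_span, Fintype.card_fin, eq_comm]
  simp_rw [hli]
  rw [← Fintype.card_subtype, ← Nat.card_eq_fintype_card]
  rcases lt_or_ge (finrank F W) 2 with hk | hk
  · have : IsEmpty {p : Fin 2 → W // LinearIndependent F p} :=
      ⟨fun p => by simpa using hk.trans_le p.2.fintype_card_le_finrank⟩
    interval_cases finrank F W <;> simp
  · rw [card_linearIndependent hk, Fin.prod_univ_two]
    simp only [Fin.val_zero, Fin.val_one, pow_zero, pow_one]
    rw [Nat.cast_mul, Nat.cast_sub (Nat.one_le_pow _ _ Fintype.card_pos),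
      Nat.cast_sub (Nat.le_self_pow (by omega) _)]
    simp

theorem card_pairs_finrank_eq (d : ℕ) :
    (#{p : Fin 2 → W | (Set.range p).finrank F = d} : ℚ) =
      numPairsOfRank (Fintype.card F) (finrank F W) d := by
  have htotal : ∑ d ∈ range 3, (#{p : Fin 2 → W | (Set.range p).finrank F = d} : ℚ) =
      ((Fintype.card F : ℚ) ^ finrank F W) ^ 2 := by
    rw [← Nat.cast_sum,
      ← card_eq_sum_card_fiberwise fun p _ => mem_range.2 (finrank_range_fin_lt p)]
    simp [card_eq_pow_finrank (K := F) (V := W)]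
  match d with
  | 0 => simp [card_pairs_finrank_eq_zero, numPairsOfRank]
  | 1 =>
    -- the pairs of rank one are what the other ranks leave of all `q ^ (2 k)` pairs
    rw [sum_range_succ, sum_range_succ, sum_range_one, card_pairs_finrank_eq_zero,
      card_pairs_finrank_eq_two] at htotal
    simp only [numPairsOfRank]
    push_cast at htotal
    linear_combination htotal
  | 2 => exact card_pairs_finrank_eq_two
  | d + 3 =>
    simp only [numPairsOfRank, Nat.cast_eq_zero, card_eq_zero, filter_eq_empty_iff]
    intro p _ h
    have := finrank_range_fin_lt (R := F) p
    omega

end Pairs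

section Subspaces

open scoped Classical

variable {F V : Type*} [Field F] [AddCommGroup V] [Module F V] [Fintype V]

variable (F V) in
noncomputable def subspacesOfFinrank (m : ℕ) : Finset (Submodule F V) :=
  (Set.toFinite {S : Submodule F V | finrank F S = m}).toFinset

theorem mem_subspacesOfFinrank {S : Submodule F V} {m : ℕ} :
    S ∈ subspacesOfFinrank F V m ↔ finrank F S = m :=
  Set.Finite.mem_toFinset _

noncomputable def pairsIn (W : Submodule F V) : Finset (Fin 2 → V) :=
  Fintype.piFinset fun _ => (W : Set V).toFinset

theorem mem_pairsIn {W : Submodule F V} {p : Fin 2 → V} : p ∈ pairsIn W ↔ ∀ i, p i ∈ W := by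
  simp [pairsIn]

theorem mem_pairsIn_iff_span_le {W : Submodule F V} {p : Fin 2 → V} :
    p ∈ pairsIn W ↔ Submodule.span F (Set.range p) ≤ W := by
  rw [mem_pairsIn, Submodule.span_le, Set.range_subset_iff]
  rfl

theorem finsum_mem_finrank_eq {M : Type*} [AddCommMonoid M] (f : Submodule F V → M) (m : ℕ) :
    ∑ᶠ S ∈ {S : Submodule F V | finrank F S = m}, f S = ∑ S ∈ subspacesOfFinrank F V m, f S :=
  finsum_mem_eq_finite_toFinset_sum f _

theorem card_subspacesOfFinrank (m : ℕ) :
    #(subspacesOfFinrank F V m) = Nat.card {S : Submodule F V // finrank F S = m} :=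
  (Nat.card_eq_card_finite_toFinset _).symm

theorem card_pairsIn (W : Submodule F V) : #(pairsIn W) = Nat.card W ^ 2 := by
  simp [pairsIn, Fintype.card_piFinset]

theorem card_subspacesOfFinrank_map_le (g : V ≃ₗ[F] V) (U : Submodule F V) (m : ℕ) :
    #{S ∈ subspacesOfFinrank F V m | U.map (g : V →ₗ[F] V) ≤ S} =
      #{S ∈ subspacesOfFinrank F V m | U ≤ S} := by
  refine card_equiv (Submodule.orderIsoMapComap g.symm).toEquiv fun S => ?_
  simp only [mem_filter, mem_subspacesOfFinrank, RelIso.coe_fn_toEquiv,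
    Submodule.orderIsoMapComap_apply, LinearEquiv.finrank_map_eq, Submodule.map_le_iff_le_comap,
    Submodule.comap_equiv_eq_map_symm]

theorem card_subspacesOfFinrank_le_eq_of_finrank_eq {U U' : Submodule F V}
    (h : finrank F U = finrank F U') (m : ℕ) :
    #{S ∈ subspacesOfFinrank F V m | U ≤ S} = #{S ∈ subspacesOfFinrank F V m | U' ≤ S} := by
  have : Module.Finite F V := Module.Finite.of_finite
  obtain ⟨g, rfl⟩ := Submodule.exists_linearEquiv_map_eq_of_finrank_eq h
  exact (card_subspacesOfFinrank_map_le g U m).symm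

theorem card_inf_sq_eq (S K : Submodule F V) :
    Nat.card ↥(S ⊓ K) ^ 2 = #{p ∈ pairsIn K | p ∈ pairsIn S} := by
  rw [← card_pairsIn]
  congr 1
  ext p
  simp only [mem_filter, mem_pairsIn, Submodule.mem_inf, forall_and]
  tauto

theorem card_subspacesOfFinrank_mem_pairsIn_eq {p p' : Fin 2 → V}
    (h : (Set.range p).finrank F = (Set.range p').finrank F) (m : ℕ) :
    #{S ∈ subspacesOfFinrank F V m | p ∈ pairsIn S} =
      #{S ∈ subspacesOfFinrank F V m | p' ∈ pairsIn S} := by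
  simp only [mem_pairsIn_iff_span_le]
  exact card_subspacesOfFinrank_le_eq_of_finrank_eq h m

variable [Fintype F]

theorem card_pairsIn_finrank_eq (W : Submodule F V) (d : ℕ) :
    (#{p ∈ pairsIn W | (Set.range p).finrank F = d} : ℚ) =
      numPairsOfRank (Fintype.card F) (finrank F W) d := by
  rw [← card_pairs_finrank_eq d]
  congr 1
  symm
  have hrank (p : Fin 2 → W) :
      (Set.range (W.subtype ∘ p)).finrank F = (Set.range p).finrank F := by
    rw [Set.finrank, Set.range_comp, Submodule.span_image, Submodule.finrank_map_subtype_eq]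
    rfl
  refine card_bij (fun p _ => W.subtype ∘ p) (fun p hp => ?_) (fun p _ p' _ h => ?_)
    (fun p hp => ?_)
  · simp only [mem_filter_univ] at hp
    exact mem_filter.2 ⟨mem_pairsIn.2 fun i => (p i).2, (hrank p).trans hp⟩
  · exact funext fun i => Subtype.ext (congrFun h i)
  · simp only [mem_filter, mem_pairsIn] at hp
    exact ⟨fun i => ⟨p i, hp.1 i⟩, (mem_filter_univ _).2 ((hrank _).symm.trans hp.2), rfl⟩

theorem sum_card_subspacesOfFinrank_mem_pairsIn (m d : ℕ) :
    (∑ p : Fin 2 → V with (Set.range p).finrank F = d,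
        #{S ∈ subspacesOfFinrank F V m | p ∈ pairsIn S} : ℚ) =
      #(subspacesOfFinrank F V m) * numPairsOfRank (Fintype.card F) m d := by
  have hS (S) (hS : S ∈ subspacesOfFinrank F V m) :
      (#{p ∈ {p : Fin 2 → V | (Set.range p).finrank F = d} | p ∈ pairsIn S} : ℚ) =
        numPairsOfRank (Fintype.card F) m d := by
    rw [← mem_subspacesOfFinrank.1 hS, ← card_pairsIn_finrank_eq, filter_filter]
    congr 2
    ext p
    simp only [mem_filter, mem_univ, true_and]
    exact and_comm
  rw [← Nat.cast_sum]
  refine (congrArg Nat.cast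
    (sum_card_bipartiteAbove_eq_sum_card_bipartiteBelow fun S p => p ∈ pairsIn S).symm).trans ?_
  rw [Nat.cast_sum, ← nsmul_eq_mul, ← sum_const]
  exact sum_congr rfl hS

theorem sum_card_inf_sq (K : Submodule F V) (m : ℕ) (hV : 2 ≤ finrank F V) :
    ∑ S ∈ subspacesOfFinrank F V m, (Nat.card ↥(S ⊓ K) : ℚ) ^ 2 =
      #(subspacesOfFinrank F V m) * ∑ d ∈ range 3,
        numPairsOfRank (Fintype.card F) (finrank F K) d * numPairsOfRank (Fintype.card F) m d /
          numPairsOfRank (Fintype.card F) (finrank F V) d := by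
  set 𝒢 := subspacesOfFinrank F V m
  set c : (Fin 2 → V) → ℕ := fun p => #{S ∈ 𝒢 | p ∈ pairsIn S}
  -- `c` is constant on pairs of rank `d`, so its sum over those in `K` is a fixed fraction of its
  -- sum over all of them
  have hclass (d : ℕ) (hd : d < 3) :
      (∑ p ∈ pairsIn K with (Set.range p).finrank F = d, c p : ℚ) =
        numPairsOfRank (Fintype.card F) (finrank F K) d *
          (#𝒢 * numPairsOfRank (Fintype.card F) m d) /
          numPairsOfRank (Fintype.card F) (finrank F V) d := by
    have hconst := card_nsmul_sum_eq_card_nsmul_sum_of_subset (f := c)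
      (s := {p ∈ pairsIn K | (Set.range p).finrank F = d})
      (t := {p | (Set.range p).finrank F = d}) (fun p hp => by simp [(mem_filter.1 hp).2])
      fun p hp p' hp' => card_subspacesOfFinrank_mem_pairsIn_eq (by simp_all) m
    rw [eq_div_iff (numPairsOfRank_ne_zero Fintype.one_lt_card hV hd),
      ← sum_card_subspacesOfFinrank_mem_pairsIn, ← card_pairsIn_finrank_eq,
      ← card_pairs_finrank_eq, mul_comm]
    exact_mod_cast hconst
  calc ∑ S ∈ 𝒢, (Nat.card ↥(S ⊓ K) : ℚ) ^ 2
      = ∑ p ∈ pairsIn K, (c p : ℚ) := by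
        simp only [← Nat.cast_pow, card_inf_sq_eq, ← Nat.cast_sum]
        exact congrArg _ (sum_card_bipartiteAbove_eq_sum_card_bipartiteBelow _)
    _ = ∑ d ∈ range 3, ∑ p ∈ pairsIn K with (Set.range p).finrank F = d, (c p : ℚ) :=
        (sum_fiberwise_of_maps_to (fun p _ => mem_range.2 (finrank_range_fin_lt p)) _).symm
    _ = _ := by
        rw [mul_sum]
        refine sum_congr rfl fun d hd => ?_
        rw [hclass d (mem_range.1 hd)]
        ring

end Subspaces

theorem four_le_two_pow {n : ℕ} (hn : 2 ≤ n) : (4 : ℚ) ≤ 2 ^ n :=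
  calc (4 : ℚ) = 2 ^ 2 := by norm_num
    _ ≤ 2 ^ n := pow_le_pow_right₀ one_le_two hn

theorem gammaVal_eq {n κ m : ℕ} (hn : 2 ≤ n) :
    gammaVal n κ m = 1 + 3 * ((2 ^ κ - 1) * (2 ^ m - 1) / (2 ^ n - 1)) +
      (2 ^ κ - 1) * (2 ^ m - 1) / (2 ^ n - 1) * ((2 ^ κ - 2) * (2 ^ m - 2) / (2 ^ n - 2)) := by
  have h4 := four_le_two_pow hn
  have hhalf (k : ℕ) : (2 : ℚ) ^ ((k : ℤ) - 1) = 2 ^ k / 2 := by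
    rw [zpow_sub₀ two_ne_zero, zpow_one, zpow_natCast]
  have : (2 : ℚ) ^ n / 2 - 1 ≠ 0 := by intro h; linarith
  rw [gammaVal, hhalf, hhalf]
  field_simp

theorem gammaVal_eq_sum_numPairsOfRank {n κ m : ℕ} (hn : 2 ≤ n) :
    gammaVal n κ m =
      ∑ d ∈ range 3, numPairsOfRank 2 κ d * numPairsOfRank 2 m d / numPairsOfRank 2 n d := by
  have h4 := four_le_two_pow hn
  have : (2 : ℚ) ^ n - 1 ≠ 0 := by linarith
  have : (2 : ℚ) ^ n - 2 ≠ 0 := by linarith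
  rw [gammaVal_eq hn]
  simp only [sum_range_succ, sum_range_zero, numPairsOfRank, Nat.cast_ofNat]
  field_simp
  ring

theorem sub_mul_sub_div_sub_le {t a b c : ℚ} (ht : 0 ≤ t) (hta : t ≤ a) (hac : a ≤ c) (hb : 0 ≤ b)
    (htc : t < c) : (a - t) * (b - t) / (c - t) ≤ a * b / c := by
  rw [div_le_div_iff₀ (by linarith) (by linarith)]
  nlinarith [mul_nonneg ht (mul_nonneg hb (sub_nonneg.2 hac)),
    mul_nonneg ht (mul_nonneg (ht.trans htc.le) (sub_nonneg.2 hta))]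

theorem gammaVal_le {n κ m : ℕ} (hn : 2 ≤ n) (hκ : κ ≤ n) (hm : m ≤ n) :
    gammaVal n κ m ≤ 1 + 3 * (2 : ℚ) ^ ((κ : ℤ) + m - n) + (4 : ℚ) ^ ((κ : ℤ) + m - n) := by
  have h2zpow : (2 : ℚ) ^ ((κ : ℤ) + m - n) = 2 ^ κ * 2 ^ m / 2 ^ n := by
    rw [zpow_sub₀ two_ne_zero, zpow_add₀ two_ne_zero, zpow_natCast, zpow_natCast, zpow_natCast]
  have h4zpow : (4 : ℚ) ^ ((κ : ℤ) + m - n) = ((2 : ℚ) ^ ((κ : ℤ) + m - n)) ^ 2 := by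
    rw [show (4 : ℚ) = 2 * 2 by norm_num, mul_zpow, sq]
  rw [gammaVal_eq hn, h4zpow, h2zpow]
  set x : ℚ := 2 ^ κ * 2 ^ m / 2 ^ n
  have hA : (1 : ℚ) ≤ 2 ^ κ := one_le_pow₀ one_le_two
  have hB : (1 : ℚ) ≤ 2 ^ m := one_le_pow₀ one_le_two
  have hAC : (2 : ℚ) ^ κ ≤ 2 ^ n := pow_le_pow_right₀ one_le_two hκ
  have hC := four_le_two_pow hn
  have hX₁ : ((2 : ℚ) ^ κ - 1) * (2 ^ m - 1) / (2 ^ n - 1) ≤ x :=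
    sub_mul_sub_div_sub_le zero_le_one hA hAC (by positivity) (by linarith)
  have hX₁₂ : ((2 : ℚ) ^ κ - 1) * (2 ^ m - 1) / (2 ^ n - 1) *
      ((2 ^ κ - 2) * (2 ^ m - 2) / (2 ^ n - 2)) ≤ x ^ 2 := by
    rcases Nat.eq_zero_or_pos κ with rfl | hκ₀
    · simp [sq_nonneg]
    rcases Nat.eq_zero_or_pos m with rfl | hm₀
    · simp [sq_nonneg]
    have hA₂ : (2 : ℚ) ≤ 2 ^ κ := le_self_pow₀ one_le_two hκ₀.ne'
    have hB₂ : (2 : ℚ) ≤ 2 ^ m := le_self_pow₀ one_le_two hm₀.ne'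
    have hX₂ : ((2 : ℚ) ^ κ - 2) * (2 ^ m - 2) / (2 ^ n - 2) ≤ x :=
      sub_mul_sub_div_sub_le zero_le_two hA₂ hAC (by positivity) (by linarith)
    rw [sq]
    exact mul_le_mul hX₁ hX₂ (div_nonneg (mul_nonneg (by linarith) (by linarith)) (by linarith))
      (by positivity)
  linarith

/-- Let `n ≥ 2`, let `V₀` be an `n`-dimensional vector space over `𝔽₂`, let `K ⊆ V₀`
be a subspace of dimension `κ`, and `0 ≤ m ≤ n`. Then the uniform average of
`|S ∩ K|²` over all `m`-dimensional subspaces `S ⊆ V₀` equals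
`1 + 3(2^κ−1)(2^m−1)/(2^n−1) + (2^κ−1)(2^κ−2)((2^m−1)(2^{m−1}−1))/((2^n−1)(2^{n−1}−1))`,
which is at most `1 + 3·2^{κ+m−n} + 4^{κ+m−n}`. -/
theorem stmt6 (n κ m : ℕ) (hn : 2 ≤ n) (hm : m ≤ n)
    (V₀ : Type) [AddCommGroup V₀] [Module F2 V₀] [Module.Finite F2 V₀]
    (hdim : Module.finrank F2 V₀ = n)
    (K : Submodule F2 V₀) (hK : Module.finrank F2 K = κ) :
    (∑ᶠ S ∈ {S : Submodule F2 V₀ | Module.finrank F2 S = m},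
        (Nat.card ↥(S ⊓ K) : ℚ) ^ 2)
        / (Nat.card {S : Submodule F2 V₀ // Module.finrank F2 S = m} : ℚ)
      = gammaVal n κ m
    ∧ gammaVal n κ m
        ≤ 1 + 3 * (2 : ℚ) ^ ((κ : ℤ) + (m : ℤ) - (n : ℤ)) +
            (4 : ℚ) ^ ((κ : ℤ) + (m : ℤ) - (n : ℤ)) := by
  have hκ : κ ≤ n := hK ▸ hdim ▸ Submodule.finrank_le K
  refine ⟨?_, gammaVal_le hn hκ hm⟩
  have : Finite V₀ := Module.finite_of_finite F2
  have : Fintype V₀ := Fintype.ofFinite V₀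
  obtain ⟨S₀, hS₀⟩ := Submodule.exists_finrank_eq (F := F2) (V := V₀) (hdim ▸ hm)
  have hN : (#(subspacesOfFinrank F2 V₀ m) : ℚ) ≠ 0 :=
    Nat.cast_ne_zero.2 (card_ne_zero_of_mem (mem_subspacesOfFinrank.2 hS₀))
  rw [finsum_mem_finrank_eq, ← card_subspacesOfFinrank, sum_card_inf_sq K m (hdim ▸ hn),
    mul_div_cancel_left₀ _ hN, gammaVal_eq_sum_numPairsOfRank hn, ZMod.card, hK, hdim]
end

section
/- For all positive integers n and k with k dividing n, the real number (2^k + 1)^{−n/k} satisfies e^{−n/(2^k·k)} · 2^{−n} < (2^k + 1)^{−n/k} < 2^{−n}. -/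
/-- For all positive integers `n, k` with `k ∣ n`, the real number
`(2^k + 1)^{−n/k}` satisfies `e^{−n/(2^k k)} · 2^{−n} < (2^k + 1)^{−n/k} < 2^{−n}`. -/
theorem stmt10 (n k : ℕ) (hn : 0 < n) (hk : 0 < k) (hdvd : k ∣ n) :
    Real.exp (-(n : ℝ) / (2 ^ k * k)) * (2 : ℝ) ^ (-(n : ℤ))
        < ((2 : ℝ) ^ k + 1) ^ (-((n / k : ℕ) : ℤ))
      ∧ ((2 : ℝ) ^ k + 1) ^ (-((n / k : ℕ) : ℤ)) < (2 : ℝ) ^ (-(n : ℤ)) := by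
  obtain ⟨m, rfl⟩ := hdvd
  have hm : 0 < m := Nat.pos_of_ne_zero (by rintro rfl; simp at hn)
  rw [Nat.mul_div_cancel_left m hk]
  have h2k : (0:ℝ) < 2 ^ k := by positivity
  have hA : (0:ℝ) < 2 ^ k + 1 := by positivity
  have hApm : (0:ℝ) < (2 ^ k + 1) ^ m := by positivity
  have h2km : ((2:ℝ)) ^ (k * m) = ((2:ℝ) ^ k) ^ m := pow_mul 2 k m
  -- rewrite zpows
  simp only [zpow_neg, zpow_natCast]
  have key : ((2:ℝ)^k + 1)^m < Real.exp ((m:ℝ)/2^k) * 2 ^ (k*m) := by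
    have hx : (1:ℝ)/2^k ≠ 0 := by positivity
    have h1 : (2:ℝ)^k + 1 < 2^k * Real.exp (1/2^k) := by
      have := Real.add_one_lt_exp hx
      have h2 : (2:ℝ)^k * (1/2^k + 1) < 2^k * Real.exp (1/2^k) :=
        mul_lt_mul_of_pos_left this h2k
      calc (2:ℝ)^k + 1 = 2^k * (1/2^k + 1) := by field_simp; ring
        _ < 2^k * Real.exp (1/2^k) := h2
    calc ((2:ℝ)^k+1)^m < (2^k * Real.exp (1/2^k))^m :=
          pow_lt_pow_left₀ h1 hA.le hm.ne'
      _ = Real.exp ((m:ℝ)/2^k) * 2^(k*m) := by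
          rw [mul_pow, ← Real.exp_nat_mul, h2km, mul_comm]
          congr 1
          ring
  have h2lt : ((2:ℝ)) ^ (k * m) < (2^k + 1)^m := by
    rw [h2km]
    exact pow_lt_pow_left₀ (by linarith) h2k.le hm.ne'
  constructor
  · have heq : Real.exp (-(↑(k * m) : ℝ) / (2 ^ k * k)) = (Real.exp ((m:ℝ)/2^k))⁻¹ := by
      rw [← Real.exp_neg]
      congr 1
      push_cast
      field_simp
    rw [heq, ← mul_inv]
    exact inv_strictAnti₀ hApm key
  · exact inv_strictAnti₀ (by positivity) h2lt
end

section
/- Let n ≥ 0, let ρ be any 2ⁿ×2ⁿ complex matrix with rows and columns indexed by 𝔽₂ⁿ, and let H_X ⊆ 𝔽₂ⁿ be a subspace. Then Σ_{a ∈ H_X} r_ρ(a) = |H_X| · 2^{−n} · Σ_{b ∈ H_X^{⊥s}} (tr(ρ Z^b))², where H_X^{⊥s} = {b ∈ 𝔽₂ⁿ : a·b = 0 for all a ∈ H_X} and r_ρ(a) = Σ_{x ∈ 𝔽₂ⁿ} ρ_{x,x} ρ_{x+a,x+a}. -/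
/-- The diagonal matrix `Z^b` with entries `(Z^b)_{x,x} = (−1)^{b·x}`. -/
noncomputable def Zmat {n : ℕ} (b : Fin n → F2) :
    Matrix (Fin n → F2) (Fin n → F2) ℂ :=
  Matrix.diagonal (fun x => (-1 : ℂ) ^ (∑ i, b i * x i).val)

/-- The computational difference sampling weight
`r_ρ(a) = Σ_x ρ_{x,x} ρ_{x+a,x+a}`. -/
noncomputable def cds {n : ℕ} (ρ : Matrix (Fin n → F2) (Fin n → F2) ℂ)
    (a : Fin n → F2) : ℂ :=
  ∑ x, ρ x x * ρ (x + a) (x + a)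

/-!
Write `K = H_X^⊥` for the dot-product orthogonal complement. Expanding the square,
`Σ_{b ∈ K} tr(ρ Z^b)² = Σ_{x,y} ρ_{xx} ρ_{yy} Σ_{b ∈ K} (-1)^{b·(x+y)}`, and by orthogonality
of characters the inner sum is `|K|` when `x + y ∈ K^⊥ = H_X` and `0` otherwise. Substituting
`y = x + a`, the left-hand side is the same double sum restricted to `x + y ∈ H_X`, and
`|H_X| · |K| = 2ⁿ` because `dim H_X + dim H_X^⊥ = n`.
-/

open Matrix Finset

abbrev dotForm (𝕜 ι : Type*) [Field 𝕜] [Fintype ι] [DecidableEq ι] :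
    LinearMap.BilinForm 𝕜 (ι → 𝕜) :=
  (dotProductEquiv 𝕜 ι).toLinearMap

section DotForm

variable {𝕜 ι : Type*} [Field 𝕜] [Fintype ι] [DecidableEq ι]

lemma dotForm_nondegenerate : (dotForm 𝕜 ι).Nondegenerate :=
  .ofSeparatingLeft fun _ hv => (dotProductEquiv 𝕜 ι).map_eq_zero_iff.1 (LinearMap.ext hv)

lemma dotForm_isRefl : (dotForm 𝕜 ι).IsRefl := fun v w h => by
  simpa [dotProduct_comm] using h

lemma finrank_add_finrank_orthogonal_dotForm (W : Submodule 𝕜 (ι → 𝕜)) :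
    Module.finrank 𝕜 W + Module.finrank 𝕜 ((dotForm 𝕜 ι).orthogonal W) = Fintype.card ι := by
  have hW : Module.finrank 𝕜 W ≤ Fintype.card ι :=
    Module.finrank_fintype_fun_eq_card (R := 𝕜) (η := ι) ▸ W.finrank_le
  rw [LinearMap.BilinForm.finrank_orthogonal dotForm_nondegenerate,
    Module.finrank_fintype_fun_eq_card, add_tsub_cancel_of_le hW]

lemma natCard_mul_natCard_orthogonal_dotForm [Finite 𝕜] (W : Submodule 𝕜 (ι → 𝕜)) :
    Nat.card W * Nat.card ((dotForm 𝕜 ι).orthogonal W) = Nat.card 𝕜 ^ Fintype.card ι := by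
  rw [Module.natCard_eq_pow_finrank (K := 𝕜) (V := W),
    Module.natCard_eq_pow_finrank (K := 𝕜) (V := (dotForm 𝕜 ι).orthogonal W), ← pow_add,
    finrank_add_finrank_orthogonal_dotForm]

end DotForm

noncomputable def signChar : AddChar F2 ℂ where
  toFun u := (-1) ^ u.val
  map_zero_eq_one' := by simp
  map_add_eq_mul' u v := by rw [ZMod.val_add, ← neg_one_pow_eq_pow_mod_two, pow_add]

lemma signChar_apply (u : F2) : signChar u = (-1) ^ u.val := rfl

lemma signChar_eq_one_iff {u : F2} : signChar u = 1 ↔ u = 0 := by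
  rw [signChar_apply, ← ZMod.val_eq_zero]
  have := ZMod.val_lt u
  interval_cases u.val <;> norm_num

lemma sum_signChar_dotProduct {ι : Type*} [Fintype ι] [DecidableEq ι]
    (W : Submodule F2 (ι → F2)) [Fintype W] (c : ι → F2)
    [Decidable (c ∈ (dotForm F2 ι).orthogonal W)] :
    ∑ b : W, signChar ((b : ι → F2) ⬝ᵥ c)
      = if c ∈ (dotForm F2 ι).orthogonal W then (Fintype.card W : ℂ) else 0 := by
  let ψ : AddChar W ℂ :=
    signChar.compAddMonoidHom (((dotForm F2 ι).flip c).comp W.subtype).toAddMonoidHom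
  have hψ : ψ = 0 ↔ c ∈ (dotForm F2 ι).orthogonal W := by
    simp only [AddChar.eq_zero_iff, LinearMap.BilinForm.mem_orthogonal_iff, Subtype.forall]
    exact forall₂_congr fun _ _ => signChar_eq_one_iff
  classical
  exact ψ.sum_eq_ite.trans (if_congr hψ rfl rfl)

section Weights

variable {n : ℕ} (ρ : Matrix (Fin n → F2) (Fin n → F2) ℂ)

lemma finsum_mem_cds (S : Set (Fin n → F2)) [DecidablePred (· ∈ S)] :
    ∑ᶠ a ∈ S, cds ρ a = ∑ x, ∑ y, if x + y ∈ S then ρ x x * ρ y y else 0 := by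
  calc ∑ᶠ a ∈ S, cds ρ a
      = ∑ x, ∑ a, if a ∈ S then ρ x x * ρ (x + a) (x + a) else 0 := by
        rw [finsum_mem_def, finsum_eq_sum_of_fintype, Finset.sum_comm]
        simp only [Set.indicator_apply, cds, Finset.sum_ite_irrel, Finset.sum_const_zero]
    _ = _ := Finset.sum_congr rfl fun x _ => by
        rw [← Equiv.sum_comp (Equiv.addLeft x)]
        simp only [Equiv.coe_addLeft, ← add_assoc, ZModModule.add_self, zero_add]

lemma trace_mul_Zmat (b : Fin n → F2) :
    trace (ρ * Zmat b) = ∑ x, ρ x x * signChar (b ⬝ᵥ x) := by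
  simp [Zmat, trace, mul_diagonal, signChar_apply, dotProduct]

lemma trace_mul_Zmat_sq (b : Fin n → F2) :
    trace (ρ * Zmat b) ^ 2 = ∑ x, ∑ y, ρ x x * ρ y y * signChar (b ⬝ᵥ (x + y)) := by
  simp only [trace_mul_Zmat, sq, Finset.sum_mul_sum, dotProduct_add, AddChar.map_add_eq_mul]
  exact Finset.sum_congr rfl fun x _ => Finset.sum_congr rfl fun y _ => by ring

lemma sum_trace_mul_Zmat_sq (W : Submodule F2 (Fin n → F2)) [Fintype W]
    [DecidablePred (· ∈ (dotForm F2 (Fin n)).orthogonal W)] :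
    ∑ b : W, trace (ρ * Zmat b) ^ 2 = Fintype.card W *
      ∑ x, ∑ y, if x + y ∈ (dotForm F2 (Fin n)).orthogonal W then ρ x x * ρ y y else 0 := by
  simp only [trace_mul_Zmat_sq, Finset.mul_sum]
  rw [Finset.sum_comm]
  refine Finset.sum_congr rfl fun x _ => ?_
  rw [Finset.sum_comm]
  refine Finset.sum_congr rfl fun y _ => ?_
  rw [← Finset.mul_sum, sum_signChar_dotProduct]
  split_ifs <;> ring

end Weights

/-- For any `2ⁿ×2ⁿ` complex matrix `ρ` indexed by `𝔽₂ⁿ` and a subspace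
`H_X ⊆ 𝔽₂ⁿ`, `Σ_{a ∈ H_X} r_ρ(a) = |H_X| · 2^{−n} · Σ_{b ∈ H_X^{⊥s}} (tr(ρ Z^b))²`,
where `H_X^{⊥s} = {b : ∀ a ∈ H_X, a·b = 0}`. -/
theorem stmt12 (n : ℕ) (ρ : Matrix (Fin n → F2) (Fin n → F2) ℂ)
    (HX : Submodule F2 (Fin n → F2)) :
    (∑ᶠ a ∈ (HX : Set (Fin n → F2)), cds ρ a)
      = (Nat.card HX : ℂ) * ((2 : ℂ) ^ n)⁻¹ *
          ∑ᶠ b ∈ {b : Fin n → F2 | ∀ a ∈ HX, ∑ i, a i * b i = 0},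
            (Matrix.trace (ρ * Zmat b)) ^ 2 := by
  classical
  set K := (dotForm F2 (Fin n)).orthogonal HX
  have hcard : (Nat.card HX * Nat.card K : ℂ) = 2 ^ n := by
    exact_mod_cast (natCard_mul_natCard_orthogonal_dotForm HX).trans (by simp)
  have hKK : (dotForm F2 (Fin n)).orthogonal K = HX :=
    LinearMap.BilinForm.orthogonal_orthogonal dotForm_nondegenerate dotForm_isRefl HX
  have hRHS : ∑ᶠ b ∈ (K : Set (Fin n → F2)), trace (ρ * Zmat b) ^ 2
      = ∑ b : K, trace (ρ * Zmat b) ^ 2 :=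
    (finsum_set_coe_eq_finsum_mem _).symm.trans (finsum_eq_sum_of_fintype _)
  change _ = _ * ∑ᶠ b ∈ (K : Set (Fin n → F2)), _
  rw [hRHS, sum_trace_mul_Zmat_sq, hKK, finsum_mem_cds, ← Nat.card_eq_fintype_card,
    ← mul_assoc, mul_right_comm _ _ (Nat.card K : ℂ), hcard,
    mul_inv_cancel₀ (pow_ne_zero n two_ne_zero), one_mul]
  rfl
end

section
/- Let n ≥ 0 and let S₁, S₂ ⊆ 𝔽₂^{2n} be subspaces. Define P_A := (1/|A|) Σ_{x ∈ A} W_x ⊗ conj(W_x) for a subspace A ⊆ 𝔽₂^{2n}. Then P_{S₁} · P_{S₂} = P_{S₁+S₂}, where S₁ + S₂ = {s₁ + s₂ : s₁ ∈ S₁, s₂ ∈ S₂}. In particular, P_{S₁} and P_{S₂} commute. -/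
open Kronecker

/-- The Weyl operator `W_v` with entries
`(W_v)_{x,y} = i^{vₓ·v_z} (−1)^{v_z·y} 1{x = y + vₓ}`. -/
noncomputable def Weyl {n : ℕ} (v : V n) : Matrix (Fin n → F2) (Fin n → F2) ℂ :=
  fun x y =>
    Complex.I ^ (∑ i, (v.1 i).val * (v.2 i).val) *
      (-1 : ℂ) ^ (∑ i, (v.2 i) * (y i)).val *
      (if x = y + v.1 then 1 else 0)

/-- `P_A = (1/|A|) Σ_{x ∈ A} W_x ⊗ conj(W_x)`. -/
noncomputable def projMat {n : ℕ} (A : Submodule F2 (V n)) :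
    Matrix ((Fin n → F2) × (Fin n → F2)) ((Fin n → F2) × (Fin n → F2)) ℂ :=
  (Nat.card A : ℂ)⁻¹ •
    ∑ᶠ x ∈ (A : Set (V n)), (Weyl x) ⊗ₖ ((Weyl x).map (starRingEnd ℂ))

/-!
The phase `i^{v_x·v_z}` of `W_v` cancels against its conjugate in `W_v ⊗ conj(W_v)`, and the
remaining signed shifts `X^{v_x} Z^{v_z}` multiply up to a sign `±1`, which appears squared.
So `v ↦ W_v ⊗ conj(W_v)` is a representation of `(𝔽₂^{2n}, +)`, and `P_{S₁} P_{S₂}` is the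
average over `S₁ × S₂` of this representation at `s₁ + s₂`. The addition map
`S₁ × S₂ → S₁ + S₂` is a surjective homomorphism, all of whose fibres have the size of its
kernel, so this average is the average over `S₁ + S₂`, i.e. `P_{S₁+S₂}`.
-/

open Matrix

theorem ZMod.neg_one_pow_val_add {R : Type*} [Ring R] (a b : ZMod 2) :
    (-1 : R) ^ (a + b).val = (-1) ^ a.val * (-1) ^ b.val := by
  rw [ZMod.val_add, ← neg_one_pow_eq_pow_mod_two, pow_add]

open Finset in
theorem AddMonoidHom.sum_comp_eq_card_ker_nsmul {G H M : Type*} [AddGroup G] [Fintype G]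
    [AddGroup H] [AddCommMonoid M] (φ : G →+ H) (f : H → M) :
    ∑ g, f (φ g) = Nat.card φ.ker • ∑ᶠ h ∈ Set.range φ, f h := by
  classical
  have fiber_card : ∀ h ∈ Finset.univ.image φ, #{g | φ g = h} = Nat.card φ.ker := by
    intro h hh
    rw [AddMonoidHom.card_fiber_eq_of_mem_range φ (by simpa using hh) ⟨0, map_zero φ⟩,
      Nat.card_eq_fintype_card, Fintype.card_subtype]
    simp only [AddMonoidHom.mem_ker]
  rw [Finset.sum_comp, Finset.sum_congr rfl fun h hh => by rw [fiber_card h hh],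
    ← Finset.smul_sum, ← finsum_mem_coe_finset, Finset.coe_image, Finset.coe_univ,
    Set.image_univ]

theorem neg_one_pow_mul_self {R : Type*} [Ring R] (k : ℕ) : (-1 : R) ^ k * (-1) ^ k = 1 := by
  rw [← pow_add, ← two_mul, pow_mul, neg_one_sq, one_pow]

section Weyl

variable {n : ℕ}

/-- `X^{v_x} Z^{v_z}`: the Weyl operator without its phase `i^{v_x·v_z}`. -/
def signedShift (v : V n) : Matrix (Fin n → F2) (Fin n → F2) ℂ :=
  of fun x y => (-1) ^ (v.2 ⬝ᵥ y).val * if x = y + v.1 then 1 else 0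

theorem Weyl_eq_smul_signedShift (v : V n) :
    Weyl v = Complex.I ^ (∑ i, (v.1 i).val * (v.2 i).val) • signedShift v := by
  ext x y
  simp [Weyl, signedShift, dotProduct]

theorem map_conj_signedShift (v : V n) : (signedShift v).map (starRingEnd ℂ) = signedShift v := by
  ext x y
  simp [signedShift, apply_ite (starRingEnd ℂ)]

theorem signedShift_mul (u v : V n) :
    signedShift u * signedShift v = (-1) ^ (u.2 ⬝ᵥ v.1).val • signedShift (u + v) := by
  ext x z
  simp only [signedShift, mul_apply, of_apply, mul_ite, ite_mul, mul_one, mul_zero, zero_mul,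
    Finset.sum_ite_eq', Finset.mem_univ, if_true, Matrix.smul_apply, Prod.fst_add,
    Prod.snd_add, dotProduct_add, add_dotProduct, ZMod.neg_one_pow_val_add, ← add_assoc,
    add_right_comm z v.1 u.1]
  split_ifs <;> ring

noncomputable def weylConjKron (v : V n) :
    Matrix ((Fin n → F2) × (Fin n → F2)) ((Fin n → F2) × (Fin n → F2)) ℂ :=
  Weyl v ⊗ₖ (Weyl v).map (starRingEnd ℂ)

theorem weylConjKron_eq_signedShift_kronecker (v : V n) :
    weylConjKron v = signedShift v ⊗ₖ signedShift v := by
  set c := Complex.I ^ (∑ i, (v.1 i).val * (v.2 i).val)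
  have hc : c * starRingEnd ℂ c = 1 := by
    rw [Complex.mul_conj, Complex.normSq_eq_norm_sq, norm_pow, Complex.norm_I]
    norm_num
  rw [weylConjKron, Weyl_eq_smul_signedShift, Matrix.map_smul' _ _ _ (map_mul _),
    map_conj_signedShift, smul_kronecker, kronecker_smul, smul_smul, hc, one_smul]

theorem weylConjKron_add (u v : V n) :
    weylConjKron (u + v) = weylConjKron u * weylConjKron v := by
  rw [weylConjKron_eq_signedShift_kronecker, weylConjKron_eq_signedShift_kronecker,
    weylConjKron_eq_signedShift_kronecker, ← mul_kronecker_mul, signedShift_mul,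
    smul_kronecker, kronecker_smul, smul_smul, neg_one_pow_mul_self, one_smul]

open Classical in
theorem projMat_eq_sum (A : Submodule F2 (V n)) :
    projMat A = (Nat.card A : ℂ)⁻¹ • ∑ a : A, weylConjKron a := by
  rw [projMat, ← finsum_set_coe_eq_finsum_mem, finsum_eq_sum_of_fintype]
  rfl

open Classical in
theorem projMat_mul_projMat (S₁ S₂ : Submodule F2 (V n)) :
    projMat S₁ * projMat S₂ = projMat (S₁ ⊔ S₂) := by
  set φ := (LinearMap.coprod S₁.subtype S₂.subtype).toAddMonoidHom
  have hrange : Set.range φ = (S₁ ⊔ S₂ : Submodule F2 (V n)) := by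
    rw [LinearMap.toAddMonoidHom_coe, ← LinearMap.coe_range, LinearMap.range_coprod,
      Submodule.range_subtype, Submodule.range_subtype]
  have hcard : Nat.card S₁ * Nat.card S₂ = Nat.card φ.ker * Nat.card ↥(S₁ ⊔ S₂) := by
    have h := φ.sum_comp_eq_card_ker_nsmul fun _ => 1
    rwa [hrange, finsum_one, ← Nat.card_coe_set_eq, SetLike.coe_sort_coe, Finset.sum_const,
      smul_eq_mul, mul_one, Finset.card_univ, ← Nat.card_eq_fintype_card, Nat.card_prod] at h
  have hsum : (∑ a : S₁, weylConjKron a) * ∑ b : S₂, weylConjKron b =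
      Nat.card φ.ker • ∑ᶠ w ∈ ((S₁ ⊔ S₂ : Submodule F2 (V n)) : Set (V n)), weylConjKron w := by
    rw [Fintype.sum_mul_sum, ← Fintype.sum_prod_type', ← hrange,
      ← φ.sum_comp_eq_card_ker_nsmul]
    simp [φ, weylConjKron_add]
  have hS₁ : (Nat.card S₁ : ℂ) ≠ 0 := Nat.cast_ne_zero.mpr Nat.card_pos.ne'
  have hS₂ : (Nat.card S₂ : ℂ) ≠ 0 := Nat.cast_ne_zero.mpr Nat.card_pos.ne'
  have hS : (Nat.card ↥(S₁ ⊔ S₂) : ℂ) ≠ 0 := Nat.cast_ne_zero.mpr Nat.card_pos.ne'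
  rw [projMat_eq_sum, projMat_eq_sum, projMat, smul_mul_smul_comm, hsum,
    ← Nat.cast_smul_eq_nsmul ℂ, smul_smul]
  congr 1
  field_simp
  exact_mod_cast hcard.symm

end Weyl

/-- For subspaces `S₁, S₂ ⊆ 𝔽₂^{2n}`, one has `P_{S₁} P_{S₂} = P_{S₁+S₂}`; in
particular `P_{S₁}` and `P_{S₂}` commute. -/
theorem stmt16 (n : ℕ) (S₁ S₂ : Submodule F2 (V n)) :
    projMat S₁ * projMat S₂ = projMat (S₁ ⊔ S₂)
      ∧ projMat S₁ * projMat S₂ = projMat S₂ * projMat S₁ :=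
  ⟨projMat_mul_projMat S₁ S₂, by rw [projMat_mul_projMat, projMat_mul_projMat, sup_comm]⟩
end
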